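/- Let V and W be real inner product spaces, let a : V × V → ℝ and b : V × W → ℝ be bilinear maps, let μ > 0, K ≥ 0, C_a ≥ 0, β > 0, and let F : V → ℝ be a linear functional with |F(v)| ≤ μK‖v‖ for all v ∈ V. Suppose |a(v,w)| ≤ C_a μ‖v‖‖w‖ for all v,w ∈ V, suppose for every q ∈ W there is a nonzero v ∈ V with b(v,q) ≥ β‖v‖‖q‖, and suppose e ∈ V and ε ∈ W satisfy a(e,v) + b(v,ε) = F(v) for all v ∈ V. Then β‖ε‖ ≤ μ(K + C_a‖e‖); in particular, if in addition b(e,q) = 0 for all q ∈ W and a(v,v) ≥ 2μ‖v‖² for all v (so that ‖e‖ ≤ K/2), then ‖ε‖ ≤ μK(1 + C_a/2)/β. (This is the abstract inf-sup duality argument behind the pressure estimate ‖ε_h‖ ≤ μ C h^k ‖u‖_{k+1} of Theorem 5.2, showing the pressure error is proportional to the viscosity μ.) -/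

import Mathlib

/-!
Testing the error equation against the inf-sup direction `v` of `ε` gives
`β ‖v‖ ‖ε‖ ≤ b v ε = F v - a e v ≤ μ (K + C_a ‖e‖) ‖v‖`, and `v ≠ 0` lets us cancel `‖v‖`.
When `b e · = 0`, testing with `v = e` and using coercivity gives `2 μ ‖e‖² ≤ F e ≤ μ K ‖e‖`,
i.e. `‖e‖ ≤ K / 2`, which is substituted into the first bound.
-/

lemma mul_norm_le_of_infsup {V W : Type*} [NormedAddCommGroup V] [Norm W]
    (b : V → W → ℝ) {β M : ℝ} (hinfsup : ∀ q : W, ∃ v : V, v ≠ 0 ∧ b v q ≥ β * ‖v‖ * ‖q‖)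
    (q : W) (hbound : ∀ v : V, b v q ≤ M * ‖v‖) : β * ‖q‖ ≤ M := by
  obtain ⟨v, hv, hbv⟩ := hinfsup q
  have hv_pos : 0 < ‖v‖ := norm_pos_iff.mpr hv
  refine le_of_mul_le_mul_right ?_ hv_pos
  linarith [hbound v]

lemma le_div_of_mul_sq_le_mul {x α M : ℝ} (hα : 0 < α) (hM : 0 ≤ M)
    (h : α * x ^ 2 ≤ M * x) : x ≤ M / α := by
  rw [le_div_iff₀ hα]
  rcases le_or_gt x 0 with hx | hx
  · nlinarith
  · exact le_of_mul_le_mul_right (by nlinarith) hx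

/-- Abstract inf-sup duality argument behind the pressure estimate
`‖ε_h‖ ≤ μ C h^k ‖u‖_{k+1}` of Theorem 5.2. -/
theorem stmt2
    {V W : Type*}
    [NormedAddCommGroup V] [InnerProductSpace ℝ V]
    [NormedAddCommGroup W] [InnerProductSpace ℝ W]
    (a : V →ₗ[ℝ] V →ₗ[ℝ] ℝ) (b : V →ₗ[ℝ] W →ₗ[ℝ] ℝ)
    (μ K Ca β : ℝ) (hμ : 0 < μ) (hK : 0 ≤ K) (hCa : 0 ≤ Ca) (hβ : 0 < β)
    (F : V →ₗ[ℝ] ℝ) (hF : ∀ v : V, |F v| ≤ μ * K * ‖v‖)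
    (habnd : ∀ v w : V, |a v w| ≤ Ca * μ * ‖v‖ * ‖w‖)
    (hinfsup : ∀ q : W, ∃ v : V, v ≠ 0 ∧ b v q ≥ β * ‖v‖ * ‖q‖)
    (e : V) (ε : W)
    (herr1 : ∀ v : V, a e v + b v ε = F v) :
    β * ‖ε‖ ≤ μ * (K + Ca * ‖e‖) ∧
      ((∀ q : W, b e q = 0) → (∀ v : V, a v v ≥ 2 * μ * ‖v‖ ^ 2) →
        ‖ε‖ ≤ μ * K * (1 + Ca / 2) / β) := by
  have hpressure : β * ‖ε‖ ≤ μ * (K + Ca * ‖e‖) :=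
    mul_norm_le_of_infsup (fun v q => b v q) hinfsup ε fun v =>
      calc b v ε = F v - a e v := by linarith [herr1 v]
        _ ≤ μ * K * ‖v‖ + Ca * μ * ‖e‖ * ‖v‖ := by
          linarith [le_abs_self (F v), neg_abs_le (a e v), hF v, habnd e v]
        _ = μ * (K + Ca * ‖e‖) * ‖v‖ := by ring
  refine ⟨hpressure, fun hbe hcoer => ?_⟩
  have henergy : ‖e‖ ≤ K / 2 := by
    have h : μ * (2 * ‖e‖ ^ 2) ≤ μ * (K * ‖e‖) := by
      linarith [hcoer e, herr1 e, hbe ε, le_abs_self (F e), hF e]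
    exact le_div_of_mul_sq_le_mul two_pos hK (le_of_mul_le_mul_left h hμ)
  rw [le_div_iff₀ hβ]
  calc ‖ε‖ * β ≤ μ * (K + Ca * ‖e‖) := by linarith
    _ ≤ μ * (K + Ca * (K / 2)) := by gcongr
    _ = μ * K * (1 + Ca / 2) := by ring
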